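/- arXiv:1710.03165 — 3 statements merged into one kernel-verified Lean document; each statement's English description precedes it below -/
import Mathlib

section
/- Let 𝓢 ⊆ 2^[n] be a Sperner family and h : 𝓢 → 2^[n] a function such that h(S) ⊆ S for every S ∈ 𝓢. Then every set shattered by 𝓕(𝓢,h) lies in 𝓗(𝓢), i.e. Sh(𝓕(𝓢,h)) ⊆ 𝓗(𝓢). -/
open Finset

/-- `𝓕` shatters `S` if every subset of `S` arises as `F ∩ S` for some `F ∈ 𝓕`. -/
def Shatters {n : ℕ} (𝓕 : Finset (Finset (Fin n))) (S : Finset (Fin n)) : Prop :=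
  𝓕.image (· ∩ S) = S.powerset

/-- The family of all subsets of `[n]` shattered by `𝓕`. -/
def ShFam {n : ℕ} (𝓕 : Finset (Finset (Fin n))) : Finset (Finset (Fin n)) :=
  Finset.univ.filter fun S => 𝓕.image (· ∩ S) = S.powerset

/-- A set system is shattering-extremal if it shatters exactly `|𝓕|` sets. -/
def SExtremal {n : ℕ} (𝓕 : Finset (Finset (Fin n))) : Prop :=
  (ShFam 𝓕).card = 𝓕.card

/-- A Sperner family: no member contains another member. -/
def IsSperner {n : ℕ} (𝓢 : Finset (Finset (Fin n))) : Prop :=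
  ∀ S ∈ 𝓢, ∀ S' ∈ 𝓢, S ⊆ S' → S = S'

/-- `Q S H = {T ⊆ [n] : T ∩ S = H}`. -/
def Q {n : ℕ} (S H : Finset (Fin n)) : Finset (Finset (Fin n)) :=
  Finset.univ.filter fun T => T ∩ S = H

/-- `𝓗(𝓢) = {T ⊆ [n] : no S ∈ 𝓢 satisfies S ⊆ T}`. -/
def HFam {n : ℕ} (𝓢 : Finset (Finset (Fin n))) : Finset (Finset (Fin n)) :=
  Finset.univ.filter fun T => ∀ S ∈ 𝓢, ¬ S ⊆ T

/-- `𝓕(𝓢,h) = 2^[n] \ ⋃_{S ∈ 𝓢} Q_{S,h(S)}`. -/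
def FFam {n : ℕ} (𝓢 : Finset (Finset (Fin n))) (h : Finset (Fin n) → Finset (Fin n)) :
    Finset (Finset (Fin n)) :=
  Finset.univ \ 𝓢.biUnion fun S => Q S (h S)


lemma mem_ShFam {n : ℕ} {𝓕 : Finset (Finset (Fin n))} {T : Finset (Fin n)} :
    T ∈ ShFam 𝓕 ↔ _root_.Shatters 𝓕 T := by
  simp [ShFam, _root_.Shatters]

lemma Shatters.exists_inter_eq {n : ℕ} {𝓕 : Finset (Finset (Fin n))} {S T H : Finset (Fin n)}
    (hT : _root_.Shatters 𝓕 T) (hST : S ⊆ T) (hHS : H ⊆ S) : ∃ F ∈ 𝓕, F ∩ S = H := by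
  obtain ⟨F, hF, hFT⟩ := mem_image.mp (hT ▸ mem_powerset.mpr (hHS.trans hST))
  refine ⟨F, hF, ?_⟩
  rw [← inter_eq_right.mpr hST, ← inter_assoc, hFT, inter_eq_left.mpr hHS]

lemma notMem_Q_of_mem_FFam {n : ℕ} {𝓢 : Finset (Finset (Fin n))}
    {h : Finset (Fin n) → Finset (Fin n)} {S F : Finset (Fin n)} (hS : S ∈ 𝓢)
    (hF : F ∈ FFam 𝓢 h) : F ∉ Q S (h S) := fun hQ =>
  (mem_sdiff.mp hF).2 (mem_biUnion.mpr ⟨S, hS, hQ⟩)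

theorem stmt_1_general {n : ℕ} (𝓢 : Finset (Finset (Fin n))) (h : Finset (Fin n) → Finset (Fin n))
    (hsub : ∀ S ∈ 𝓢, h S ⊆ S) :
    ShFam (FFam 𝓢 h) ⊆ HFam 𝓢 := by
  intro T hT
  simp only [HFam, mem_filter, mem_univ, true_and]
  intro S hS hST
  obtain ⟨F, hF, hFS⟩ := (mem_ShFam.mp hT).exists_inter_eq hST (hsub S hS)
  exact notMem_Q_of_mem_FFam hS hF (by simpa [Q] using hFS)

/-- Claim: every set shattered by `𝓕(𝓢,h)` lies in `𝓗(𝓢)`. -/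
theorem stmt_1 {n : ℕ} (𝓢 : Finset (Finset (Fin n))) (h : Finset (Fin n) → Finset (Fin n))
    (hSperner : IsSperner 𝓢) (hsub : ∀ S ∈ 𝓢, h S ⊆ S) :
    ShFam (FFam 𝓢 h) ⊆ HFam 𝓢 :=
  stmt_1_general 𝓢 h hsub
end

section
/- Let 𝓕 ⊆ 2^[n] be an s-extremal set system. Then there exist a Sperner family 𝓢 ⊆ 2^[n] and a function h : 𝓢 → 2^[n] with h(S) ⊆ S for every S ∈ 𝓢 such that 𝓕 = 𝓕(𝓢,h) and Sh(𝓕) = 𝓗(𝓢). -/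
open Finset

section Aux
open Classical in
lemma shFam_eq_shatterer {n : ℕ} (𝓕 : Finset (Finset (Fin n))) :
    ShFam 𝓕 = 𝓕.shatterer := by
  ext S
  simp only [ShFam, mem_filter, mem_univ, true_and, mem_shatterer, shatters_iff]
  constructor
  · intro h; rw [← h]; apply Finset.image_congr; intro x _; exact inter_comm S x
  · intro h; rw [← h]; apply Finset.image_congr; intro x _; exact inter_comm x S

lemma mem_shFam_iff {n : ℕ} {𝓕 : Finset (Finset (Fin n))} {S : Finset (Fin n)} :
    S ∈ ShFam 𝓕 ↔ 𝓕.Shatters S := by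
  rw [shFam_eq_shatterer, mem_shatterer]

/-- Every non-shattered set contains a minimal non-shattered set. -/
lemma exists_minimal_nonshattered {n : ℕ} (𝓕 : Finset (Finset (Fin n))) :
    ∀ T : Finset (Fin n), T ∉ ShFam 𝓕 →
      ∃ S, S ⊆ T ∧ S ∉ ShFam 𝓕 ∧ ∀ S' ⊂ S, S' ∈ ShFam 𝓕 := by
  intro T
  induction T using Finset.strongInduction with
  | _ T ih =>
    intro hT
    by_cases h : ∀ S' ⊂ T, S' ∈ ShFam 𝓕
    · exact ⟨T, Finset.Subset.rfl, hT, h⟩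
    · push_neg at h
      obtain ⟨S', hS'T, hS'⟩ := h
      obtain ⟨S, hST, hS1, hS2⟩ := ih S' hS'T hS'
      exact ⟨S, hST.trans hS'T.subset, hS1, hS2⟩
end Aux

/-- Existence: every s-extremal family is of the form `𝓕(𝓢,h)` with `Sh(𝓕) = 𝓗(𝓢)`. -/
theorem stmt_2 {n : ℕ} (𝓕 : Finset (Finset (Fin n))) (hext : SExtremal 𝓕) :
    ∃ (𝓢 : Finset (Finset (Fin n))) (h : Finset (Fin n) → Finset (Fin n)),
      IsSperner 𝓢 ∧ (∀ S ∈ 𝓢, h S ⊆ S) ∧ 𝓕 = FFam 𝓢 h ∧ ShFam 𝓕 = HFam 𝓢 := by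

  classical
  -- 𝓢 : minimal non-shattered sets
  set 𝓢 : Finset (Finset (Fin n)) :=
    Finset.univ.filter (fun S => S ∉ ShFam 𝓕 ∧ ∀ S' ⊂ S, S' ∈ ShFam 𝓕) with h𝓢
  have mem𝓢 : ∀ S, S ∈ 𝓢 ↔ S ∉ ShFam 𝓕 ∧ ∀ S' ⊂ S, S' ∈ ShFam 𝓕 := by
    intro S; simp [h𝓢]
  -- choose h
  have hex : ∀ S ∈ 𝓢, ∃ H, H ⊆ S ∧ ∀ F ∈ 𝓕, F ∩ S ≠ H := by
    intro S hS
    have hns : ¬ 𝓕.Shatters S := fun hsh => ((mem𝓢 S).1 hS).1 (mem_shFam_iff.2 hsh)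
    by_contra hc
    push_neg at hc
    refine hns fun t ht => ?_
    obtain ⟨F, hF, hFt⟩ := hc t ht
    exact ⟨F, hF, by rw [inter_comm]; exact hFt⟩
  set h : Finset (Fin n) → Finset (Fin n) := fun S =>
    if hS : ∃ H, H ⊆ S ∧ ∀ F ∈ 𝓕, F ∩ S ≠ H then hS.choose else ∅ with hdef
  have hprop : ∀ S ∈ 𝓢, h S ⊆ S ∧ ∀ F ∈ 𝓕, F ∩ S ≠ h S := by
    intro S hS
    have := hex S hS
    simp only [hdef, dif_pos this]
    exact this.choose_spec
  -- ShFam 𝓕 = HFam 𝓢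
  have hShH : ShFam 𝓕 = HFam 𝓢 := by
    ext T
    simp only [HFam, mem_filter, mem_univ, true_and]
    constructor
    · intro hT S hS hST
      exact ((mem𝓢 S).1 hS).1 (mem_shFam_iff.2
        ((mem_shFam_iff.1 hT).mono_right hST))
    · intro hT
      by_contra hTn
      obtain ⟨S, hST, hS1, hS2⟩ := exists_minimal_nonshattered 𝓕 T hTn
      exact hT S ((mem𝓢 S).2 ⟨hS1, hS2⟩) hST
  -- Sperner
  have hSp : IsSperner 𝓢 := by
    intro S hS S' hS' hsub
    by_contra hne
    exact ((mem𝓢 S).1 hS).1 (((mem𝓢 S').1 hS').2 S (ssubset_of_subset_of_ne hsub hne))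
  -- 𝓕 ⊆ FFam 𝓢 h
  have hsubF : 𝓕 ⊆ FFam 𝓢 h := by
    intro F hF
    simp only [FFam, mem_sdiff, mem_univ, true_and, mem_biUnion, not_exists]
    push_neg
    intro S hS
    simp only [Q, mem_filter, mem_univ, true_and]
    exact (hprop S hS).2 F hF
  -- ShFam (FFam 𝓢 h) ⊆ HFam 𝓢
  have hShFF : ShFam (FFam 𝓢 h) ⊆ HFam 𝓢 := by
    intro T hT
    simp only [HFam, mem_filter, mem_univ, true_and]
    intro S hS hST
    have hsh := mem_shFam_iff.1 hT
    obtain ⟨F, hF, hFT⟩ := hsh ((hprop S hS).1.trans hST)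
    have hFQ : F ∩ S = h S := by
      have : T ∩ F ∩ S = h S ∩ S := by rw [hFT]
      rw [inter_eq_left.2 (hprop S hS).1] at this
      rw [← this, inter_comm T F, inter_assoc, inter_eq_right.2 hST]
    simp only [FFam, mem_sdiff, mem_univ, true_and, mem_biUnion] at hF
    exact hF ⟨S, hS, by simp [Q, hFQ]⟩
  -- cardinality chain
  have hcard : (FFam 𝓢 h).card ≤ 𝓕.card := by
    calc (FFam 𝓢 h).card ≤ (FFam 𝓢 h).shatterer.card := card_le_card_shatterer _
      _ = (ShFam (FFam 𝓢 h)).card := by rw [shFam_eq_shatterer]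
      _ ≤ (HFam 𝓢).card := Finset.card_le_card hShFF
      _ = (ShFam 𝓕).card := by rw [hShH]
      _ = 𝓕.card := hext
  have hFeq : 𝓕 = FFam 𝓢 h :=
    Finset.eq_of_subset_of_card_le hsubF hcard
  exact ⟨𝓢, h, hSp, fun S hS => (hprop S hS).1, hFeq, hShH⟩
end

section
/- Let 𝓢 ⊆ 2^[n] be a Sperner family and A ⊆ [n] a fixed set, and let h_A : 𝓢 → 2^[n] be defined by h_A(S) = S ∩ A. Then 𝓕(𝓢,h_A) is s-extremal and Sh(𝓕(𝓢,h_A)) = 𝓗(𝓢). -/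
open Finset

lemma mem_FFam {n : ℕ} (𝓢 : Finset (Finset (Fin n))) (h : Finset (Fin n) → Finset (Fin n))
    (T : Finset (Fin n)) : T ∈ FFam 𝓢 h ↔ ∀ S ∈ 𝓢, T ∩ S ≠ h S := by
  simp [FFam, Q]

lemma mem_HFam {n : ℕ} (𝓢 : Finset (Finset (Fin n))) (T : Finset (Fin n)) :
    T ∈ HFam 𝓢 ↔ ∀ S ∈ 𝓢, ¬ S ⊆ T := by
  simp [HFam]

/-- For `h_A(S) = S ∩ A`, the family `𝓕(𝓢,h_A)` is s-extremal with `Sh = 𝓗(𝓢)`. -/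
theorem stmt_7 {n : ℕ} (𝓢 : Finset (Finset (Fin n))) (A : Finset (Fin n))
    (hSperner : IsSperner 𝓢) :
    SExtremal (FFam 𝓢 (fun S => S ∩ A)) ∧ ShFam (FFam 𝓢 (fun S => S ∩ A)) = HFam 𝓢 := by
  have hSh : ShFam (FFam 𝓢 (fun S => S ∩ A)) = HFam 𝓢 := by
    ext B
    simp only [ShFam, HFam, mem_filter, mem_univ, true_and]
    constructor
    · intro hB S hS hSB
      have hmem : A ∩ B ∈ (FFam 𝓢 (fun S => S ∩ A)).image (· ∩ B) := by
        rw [hB]; exact mem_powerset.2 inter_subset_right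
      obtain ⟨F, hF, hFB⟩ := mem_image.1 hmem
      rw [mem_FFam] at hF
      apply hF S hS
      ext x
      have h1 := Finset.ext_iff.1 hFB x
      have h2 := @hSB x
      simp only [mem_inter] at *
      tauto
    · intro hB
      apply Finset.Subset.antisymm
      · intro H hH
        obtain ⟨F, hF, rfl⟩ := mem_image.1 hH
        exact mem_powerset.2 inter_subset_right
      · intro H hH
        rw [mem_powerset] at hH
        apply mem_image.2
        refine ⟨H ∪ (Bᶜ \ A), ?_, ?_⟩
        · rw [mem_FFam]
          intro S hS hcon
          obtain ⟨x, hxS, hxB⟩ := not_subset.1 (hB S hS)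
          have h1 := Finset.ext_iff.1 hcon x
          have h2 := @hH x
          simp only [mem_inter, mem_union, mem_sdiff, mem_compl] at *
          tauto
        · ext x
          have h2 := @hH x
          simp only [mem_inter, mem_union, mem_sdiff, mem_compl]
          tauto
  have hcard : (FFam 𝓢 (fun S => S ∩ A)).card = (HFam 𝓢).card := by
    apply Finset.card_bij' (fun T _ => (symmDiff T A)ᶜ) (fun T _ => symmDiff Tᶜ A)
    · intro T hT
      rw [mem_HFam]
      intro S hS hsub
      rw [mem_FFam] at hT
      apply hT S hS
      ext x
      have h1 := @hsub x
      simp only [mem_inter, mem_compl, Finset.mem_symmDiff] at *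
      tauto
    · intro T hT
      rw [mem_FFam]
      intro S hS hcon
      rw [mem_HFam] at hT
      apply hT S hS
      intro x hx
      have h1 := Finset.ext_iff.1 hcon x
      simp only [mem_inter, mem_compl, Finset.mem_symmDiff] at *
      tauto
    · intro T _
      ext x
      simp only [mem_compl, Finset.mem_symmDiff]
      tauto
    · intro T _
      ext x
      simp only [mem_compl, Finset.mem_symmDiff]
      tauto
  exact ⟨by rw [SExtremal, hSh, hcard], hSh⟩
end
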